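/- Let V be a finite type, M ≥ 1 an integer, w : V → V → ℤ with |w u v| ≤ M for all u ≠ v, and let w₄ be the four-layer graph on V × Fin 4. Then for every v : V, dist_{w₄}((v,0),(v,3)) = ⨅ over pairs (u,z) with v, u, z pairwise distinct of (3M + w v u + w u z + w z v) (a nonnegative integer for each such pair, with the infimum over an empty index set being ⊤). -/

import Mathlib

/-- Weight of a walk starting at `u` and visiting the vertices of `p` in order. -/
def walkWeight {V : Type*} (w : V → V → ℕ∞) : V → List V → ℕ∞
  | _, [] => 0
  | u, x :: xs => w u x + walkWeight w x xs

/-- Shortest-path distance: infimum of weights of walks from `u` to `v`. -/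
noncomputable def gdist {V : Type*} (w : V → V → ℕ∞) (u v : V) : ℕ∞ :=
  ⨅ (p : List V) (_ : (u :: p).getLast (List.cons_ne_nil u p) = v), walkWeight w u p

/-- Eccentricity of a vertex. -/
noncomputable def ecc {V : Type*} (w : V → V → ℕ∞) (v : V) : ℕ∞ :=
  ⨆ u, gdist w v u

/-- Radius. -/
noncomputable def rad {V : Type*} (w : V → V → ℕ∞) : ℕ∞ :=
  ⨅ v, ecc w v

/-- Diameter. -/
noncomputable def diam {V : Type*} (w : V → V → ℕ∞) : ℕ∞ :=
  ⨆ v, ecc w v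

/-- Four-layer graph on `V × Fin 4` (parts A, B, C, D): edges `(u,i) → (v,i+1)` of weight
`M + w u v` for each `i ∈ {0,1,2}` and `u ≠ v`; all other weights `⊤`. -/
def layer4 {V : Type*} [DecidableEq V] (w : V → V → ℤ) (M : ℤ) :
    V × Fin 4 → V × Fin 4 → ℕ∞ := fun p q =>
  if p.1 ≠ q.1 ∧ (q.2 : ℕ) = (p.2 : ℕ) + 1 then ((M + w p.1 q.1).toNat : ℕ∞) else ⊤

/-!
Every finite-weight edge of `layer4` climbs exactly one layer, so a finite-weight walk from
`(v, 0)` to `(v, 3)` has three edges and is a triangle `v → u → z → v` whose consecutive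
vertices are distinct. Since `|w| ≤ M`, each edge weight `M + w` is nonnegative, so the
truncations `Int.toNat` add up exactly to the weight of the triangle.
-/

theorem level_getLast_of_walkWeight_ne_top {V : Type*} {w : V → V → ℕ∞} (f : V → ℕ)
    (hf : ∀ p q, w p q ≠ ⊤ → f q = f p + 1) :
    ∀ (s : V) (p : List V), walkWeight w s p ≠ ⊤ →
      f ((s :: p).getLast (List.cons_ne_nil s p)) = f s + p.length
  | _, [], _ => rfl
  | s, x :: xs, h => by
    rw [walkWeight, Ne, ENat.add_eq_top, not_or] at h
    rw [List.getLast_cons (List.cons_ne_nil x xs),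
      level_getLast_of_walkWeight_ne_top f hf x xs h.2, hf s x h.1, List.length_cons]
    ring

theorem gdist_le_walkWeight {V : Type*} (w : V → V → ℕ∞) {u v : V} (p : List V)
    (hp : (u :: p).getLast (List.cons_ne_nil u p) = v) : gdist w u v ≤ walkWeight w u p :=
  iInf₂_le p hp

theorem Int.natCast_toNat_add_toNat {a b : ℤ} (ha : 0 ≤ a) (hb : 0 ≤ b) :
    ((a + b).toNat : ℕ∞) = a.toNat + b.toNat := by
  rw [Int.toNat_add ha hb, Nat.cast_add]

section layer4

variable {V : Type*} [DecidableEq V] {w : V → V → ℤ} {M : ℤ}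

theorem layer4_of_ne {u v : V} (huv : u ≠ v) {i j : Fin 4} (hij : (j : ℕ) = i + 1) :
    layer4 w M (u, i) (v, j) = ((M + w u v).toNat : ℕ∞) :=
  if_pos ⟨huv, hij⟩

theorem layer4_ne_top {p q : V × Fin 4} (h : layer4 w M p q ≠ ⊤) :
    p.1 ≠ q.1 ∧ (q.2 : ℕ) = p.2 + 1 := by
  by_contra hc
  exact h (if_neg hc)

theorem eq_triangle_of_walkWeight_layer4_ne_top {v : V} {p : List (V × Fin 4)}
    (hp : ((v, 0) :: p).getLast (List.cons_ne_nil _ p) = (v, 3))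
    (hfin : walkWeight (layer4 w M) (v, 0) p ≠ ⊤) :
    ∃ u z, v ≠ u ∧ v ≠ z ∧ u ≠ z ∧ p = [(u, 1), (z, 2), (v, 3)] := by
  have hlen := level_getLast_of_walkWeight_ne_top (fun q : V × Fin 4 => (q.2 : ℕ))
    (fun _ _ => fun h => (layer4_ne_top h).2) _ p hfin
  rw [hp] at hlen
  match p, hlen with
  | [(u, i), (z, j), c], _ =>
    obtain rfl : c = (v, 3) := hp
    simp only [walkWeight, Ne, ENat.add_eq_top, not_or] at hfin
    obtain ⟨hvu, hi⟩ := layer4_ne_top hfin.1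
    obtain ⟨huz, hj⟩ := layer4_ne_top hfin.2.1
    obtain ⟨hzv, -⟩ := layer4_ne_top hfin.2.2.1
    obtain rfl : i = 1 := Fin.ext hi
    obtain rfl : j = 2 := Fin.ext hj
    exact ⟨u, z, hvu, Ne.symm hzv, huz, rfl⟩

theorem walkWeight_layer4_triangle (hbound : ∀ u v : V, u ≠ v → |w u v| ≤ M) {v u z : V}
    (hvu : v ≠ u) (hvz : v ≠ z) (huz : u ≠ z) :
    walkWeight (layer4 w M) (v, 0) [(u, 1), (z, 2), (v, 3)] =
      ((3 * M + w v u + w u z + w z v).toNat : ℕ∞) := by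
  have hedge : ∀ a b : V, a ≠ b → 0 ≤ M + w a b := fun a b hab =>
    neg_le_iff_add_nonneg'.mp (abs_le.mp (hbound a b hab)).1
  simp only [walkWeight, add_zero]
  rw [layer4_of_ne hvu rfl, layer4_of_ne huz rfl, layer4_of_ne hvz.symm rfl, ← add_assoc,
    ← Int.natCast_toNat_add_toNat (hedge v u hvu) (hedge u z huz),
    ← Int.natCast_toNat_add_toNat (add_nonneg (hedge v u hvu) (hedge u z huz))
      (hedge z v hvz.symm)]
  congr 2
  ring

end layer4

theorem stmt15_general {V : Type*} [Fintype V] [DecidableEq V] (M : ℤ)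
    (w : V → V → ℤ) (hbound : ∀ u v : V, u ≠ v → |w u v| ≤ M) :
    ∀ v : V,
      gdist (layer4 w M) (v, 0) (v, 3) =
        ⨅ (u : V) (z : V) (_ : v ≠ u ∧ v ≠ z ∧ u ≠ z),
          ((3 * M + w v u + w u z + w z v).toNat : ℕ∞) := by
  intro v
  apply le_antisymm
  · refine le_iInf₂ fun u z => le_iInf fun ⟨hvu, hvz, huz⟩ => ?_
    rw [← walkWeight_layer4_triangle hbound hvu hvz huz]
    exact gdist_le_walkWeight _ _ rfl
  · refine le_iInf₂ fun p hp => ?_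
    by_cases hfin : walkWeight (layer4 w M) (v, 0) p = ⊤
    · exact hfin ▸ le_top
    obtain ⟨u, z, hvu, hvz, huz, rfl⟩ := eq_triangle_of_walkWeight_layer4_ne_top hp hfin
    rw [walkWeight_layer4_triangle hbound hvu hvz huz]
    exact iInf₂_le_of_le u z (iInf_le _ ⟨hvu, hvz, huz⟩)

theorem stmt15 {V : Type*} [Fintype V] [DecidableEq V] (M : ℤ) (hM : 1 ≤ M)
    (w : V → V → ℤ) (hbound : ∀ u v : V, u ≠ v → |w u v| ≤ M) :
    ∀ v : V,
      gdist (layer4 w M) (v, 0) (v, 3) =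
        ⨅ (u : V) (z : V) (_ : v ≠ u ∧ v ≠ z ∧ u ≠ z),
          ((3 * M + w v u + w u z + w z v).toNat : ℕ∞) :=
  stmt15_general M w hbound
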